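/- arXiv:2102.09908 — 7 statements merged into one kernel-verified Lean document; each statement's English description precedes it below -/
import Mathlib

section
/- Given a cartesian spacial fibrous preorder (X, (≤^i)_{i∈I}, (∂^i)_{i∈I}) indexed by a unitary magma I, the collection τ = {O ⊆ X : ∀ x ∈ O, ∃ i ∈ I, N(i,x) ⊆ O}, where N(i,x) = {y ∈ X : x ≤^i y}, is a topology on X. -/
/-- the collection of sets `O` such that every `x ∈ O` has some
`N(i,x) = {y | x ≤^i y} ⊆ O` is a topology on `X`, for any cartesian spacial
fibrous preorder indexed by a unitary magma `I`. -/
theorem stmt_0 {I X : Type*} [MulOneClass I]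
    (r : I → X → X → Prop) (d : I → X → X → I)
    (C1 : ∀ i x, r i x x)
    (C2 : ∀ i x y z, r i x y → r (d i x y) y z → r i x z)
    (C3 : ∀ i j x y, r (i * j) x y → r i x y ∧ r j x y) :
    ∃ T : TopologicalSpace X,
      ∀ O : Set X, T.IsOpen O ↔ ∀ x ∈ O, ∃ i : I, {y | r i x y} ⊆ O := by
  refine ⟨⟨fun O => ∀ x ∈ O, ∃ i : I, {y | r i x y} ⊆ O, ?_, ?_, ?_⟩, fun O => Iff.rfl⟩
  · intro x _; exact ⟨1, fun y _ => trivial⟩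
  · rintro S U hS hU x ⟨hxS, hxU⟩
    obtain ⟨i, hi⟩ := hS x hxS
    obtain ⟨j, hj⟩ := hU x hxU
    exact ⟨i * j, fun y hy => ⟨hi (C3 i j x y hy).1, hj (C3 i j x y hy).2⟩⟩
  · rintro S hS x ⟨O, hO, hxO⟩
    obtain ⟨i, hi⟩ := hS O hO x hxO
    exact ⟨i, fun y hy => ⟨O, hO, hi hy⟩⟩
end

section
/- In the topology induced by a cartesian spacial fibrous preorder, each set N(i,x) = {y ∈ X : x ≤^i y} is an open neighbourhood of x. -/
/-- in the topology induced by a cartesian spacial fibrous preorder,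
each `N(i,x) = {y | x ≤^i y}` is an open neighbourhood of `x`. -/
theorem stmt_1 {I X : Type*} [MulOneClass I]
    (r : I → X → X → Prop) (d : I → X → X → I)
    (C1 : ∀ i x, r i x x)
    (C2 : ∀ i x y z, r i x y → r (d i x y) y z → r i x z)
    (C3 : ∀ i j x y, r (i * j) x y → r i x y ∧ r j x y)
    (T : TopologicalSpace X)
    (hT : ∀ O : Set X, T.IsOpen O ↔ ∀ x ∈ O, ∃ i : I, {y | r i x y} ⊆ O)
    (i : I) (x : X) :
    T.IsOpen {y | r i x y} ∧ x ∈ {y | r i x y} := by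
  refine ⟨(hT _).2 ?_, C1 i x⟩
  intro y hy
  exact ⟨d i x y, fun z hz => C2 i x y z hy hz⟩
end

section
/- Let (X,d) be a metric space. Define, for n ∈ ℕ (positive naturals), x ≤^n y iff d(x,y) < 1/n, and ∂^n(x,y) = k for some k with 1/k ≤ 1/n − d(x,y). Then (X, (≤^n), (∂^n)) is a cartesian spacial fibrous preorder indexed by the unitary magma (ℕ, ·, 1). -/
/-- a metric space gives a cartesian spacial fibrous preorder
indexed by the positive naturals under multiplication, with `x ≤^n y ↔ d(x,y) < 1/n`
and `∂^n(x,y) = k` any positive natural with `1/k ≤ 1/n - d(x,y)`. -/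
theorem stmt_2 {X : Type*} [MetricSpace X]
    (d : ℕ+ → X → X → ℕ+)
    (hd : ∀ (n : ℕ+) (x y : X), dist x y < 1 / (n : ℝ) →
      (1 : ℝ) / (d n x y : ℝ) ≤ 1 / (n : ℝ) - dist x y) :
    (∀ (n : ℕ+) (x : X), dist x x < 1 / (n : ℝ)) ∧
    (∀ (n : ℕ+) (x y z : X), dist x y < 1 / (n : ℝ) →
      dist y z < 1 / ((d n x y : ℕ+) : ℝ) → dist x z < 1 / (n : ℝ)) ∧
    (∀ (n m : ℕ+) (x y : X), dist x y < 1 / ((n * m : ℕ+) : ℝ) →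
      dist x y < 1 / (n : ℝ) ∧ dist x y < 1 / (m : ℝ)) := by
  have hpos : ∀ n : ℕ+, (0 : ℝ) < (n : ℝ) := fun n => by exact_mod_cast n.pos
  refine ⟨fun n x => by rw [dist_self]; exact one_div_pos.mpr (hpos n), ?_, ?_⟩
  · intro n x y z hxy hyz
    have h := hd n x y hxy
    calc dist x z ≤ dist x y + dist y z := dist_triangle x y z
      _ < dist x y + 1 / ((d n x y : ℕ+) : ℝ) := by linarith
      _ ≤ 1 / (n : ℝ) := by linarith
  · intro n m x y h
    have hnm : ((n * m : ℕ+) : ℝ) = (n : ℝ) * (m : ℝ) := by push_cast; ring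
    rw [hnm] at h
    constructor
    · calc dist x y < 1 / ((n : ℝ) * m) := h
        _ ≤ 1 / (n : ℝ) := by
          apply one_div_le_one_div_of_le (hpos n)
          nlinarith [hpos n, hpos m, (show (1:ℝ) ≤ (m:ℝ) by exact_mod_cast m.one_le)]
    · calc dist x y < 1 / ((n : ℝ) * m) := h
        _ ≤ 1 / (m : ℝ) := by
          apply one_div_le_one_div_of_le (hpos m)
          nlinarith [hpos n, hpos m, (show (1:ℝ) ≤ (n:ℝ) by exact_mod_cast n.one_le)]
end

section
/- Let (I,·,1) be a unitary magma and (X,τ) a topological space. Suppose there exist maps η : I × X → τ and γ : {(U,x) : x ∈ U ∈ τ} → I such that (i) x ∈ η(n,x) for all n ∈ I and x ∈ X, (ii) η(γ(U,x),x) ⊆ U whenever x ∈ U ∈ τ, (iii) η(n·m,x) ⊆ η(n,x) ∩ η(m,x). Then defining x ≤^i y iff y ∈ η(i,x), and ∂^i(x,y) = γ(η(i,x), y), gives a cartesian spacial fibrous preorder on X whose induced topology equals τ. -/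
/-- given `η` and `γ` as in Theorem 3.2(e), setting `x ≤^i y ↔ y ∈ η i x`
and `∂^i(x,y) = γ (η i x) y` yields a cartesian spacial fibrous preorder whose
induced topology equals `τ`. -/
theorem stmt_5 {I X : Type*} [MulOneClass I] [T : TopologicalSpace X]
    (η : I → X → Set X) (γ : Set X → X → I)
    (hopen : ∀ (n : I) (x : X), IsOpen (η n x))
    (h1 : ∀ (n : I) (x : X), x ∈ η n x)
    (h2 : ∀ (U : Set X) (x : X), IsOpen U → x ∈ U → η (γ U x) x ⊆ U)
    (h3 : ∀ (n m : I) (x : X), η (n * m) x ⊆ η n x ∩ η m x) :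
    (∀ (i : I) (x : X), x ∈ η i x) ∧
    (∀ (i : I) (x y z : X), y ∈ η i x → z ∈ η (γ (η i x) y) y → z ∈ η i x) ∧
    (∀ (i j : I) (x y : X), y ∈ η (i * j) x → y ∈ η i x ∧ y ∈ η j x) ∧
    (∀ O : Set X, IsOpen O ↔ ∀ x ∈ O, ∃ i : I, {y | y ∈ η i x} ⊆ O) := by
  refine ⟨h1, ?_, ?_, ?_⟩
  · intro i x y z hy hz
    exact h2 (η i x) y (hopen i x) hy hz
  · intro i j x y h
    exact h3 i j x h
  · intro O
    constructor
    · intro hO x hx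
      exact ⟨γ O x, h2 O x hO hx⟩
    · intro h
      rw [isOpen_iff_mem_nhds]
      intro x hx
      obtain ⟨i, hi⟩ := h x hx
      exact Filter.mem_of_superset ((hopen i x).mem_nhds (h1 i x)) hi
end

section
/- Let (I,·,1) be a unitary magma, (E,≤) a preorder, p : E × B × B → E a lax-left-associative Mal'tsev operation, and g : I → E a linking map. Define x ≤^n y iff there exists m ∈ I with g(m) ≤ p(g(n),x,y), and ∂^n(x,y) = m for such an m. Then (B, (≤^n), (∂^n)) is a cartesian spacial fibrous preorder indexed by I, hence induces a topology on B with neighbourhoods N(n,x) = {y ∈ B : ∃ m ∈ I, g(m) ≤ p(g(n),x,y)}. -/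
/-- a lax-left-associative Mal'tsev operation `p` together with a
linking map `g` yields a cartesian spacial fibrous preorder on `B`
(`x ≤^n y ↔ ∃ m, g m ≤ p (g n) x y`), hence a topology on `B` with
neighbourhoods `N(n,x)`. -/
theorem stmt_10 {I E B : Type*} [MulOneClass I] [Preorder E]
    (p : E → B → B → E) (g : I → E)
    (hp1 : ∀ (a : E) (x : B), a ≤ p a x x)
    (hp2 : ∀ (a : E) (x y z : B), p (p a x y) y z ≤ p a x z)
    (hp3 : ∀ (a b : E) (x y : B), a ≤ b → p a x y ≤ p b x y)
    (hg : ∀ n k m : I, g (n * (k * m)) ≤ g (n * m))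
    (d : I → B → B → I)
    (hd : ∀ (n : I) (x y : B), (∃ m : I, g m ≤ p (g n) x y) →
      g (d n x y) ≤ p (g n) x y) :
    (∀ (n : I) (x : B), ∃ m : I, g m ≤ p (g n) x x) ∧
    (∀ (n : I) (x y z : B), (∃ m : I, g m ≤ p (g n) x y) →
      (∃ m : I, g m ≤ p (g (d n x y)) y z) → ∃ m : I, g m ≤ p (g n) x z) ∧
    (∀ (n k : I) (x y : B), (∃ m : I, g m ≤ p (g (n * k)) x y) →
      (∃ m : I, g m ≤ p (g n) x y) ∧ (∃ m : I, g m ≤ p (g k) x y)) ∧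
    (∃ T : TopologicalSpace B, ∀ O : Set B,
      T.IsOpen O ↔ ∀ x ∈ O, ∃ n : I, {y | ∃ m : I, g m ≤ p (g n) x y} ⊆ O) := by
  -- auxiliary monotonicity facts from the linking map
  have hL : ∀ n k : I, g (n * k) ≤ g n := by
    intro n k
    have := hg n k 1
    simpa [mul_one] using this
  have hR : ∀ n k : I, g (n * k) ≤ g k := by
    intro n k
    have := hg 1 n k
    simpa [one_mul] using this
  have C3 : ∀ (n k : I) (x y : B), (∃ m : I, g m ≤ p (g (n * k)) x y) →
      (∃ m : I, g m ≤ p (g n) x y) ∧ (∃ m : I, g m ≤ p (g k) x y) := by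
    intro n k x y ⟨m, hm⟩
    exact ⟨⟨m, hm.trans (hp3 _ _ _ _ (hL n k))⟩,
           ⟨m, hm.trans (hp3 _ _ _ _ (hR n k))⟩⟩
  refine ⟨fun n x => ⟨n, hp1 (g n) x⟩, ?_, C3, ?_⟩
  · intro n x y z h1 ⟨m, hm⟩
    refine ⟨m, hm.trans ?_⟩
    calc p (g (d n x y)) y z ≤ p (p (g n) x y) y z := hp3 _ _ _ _ (hd n x y h1)
      _ ≤ p (g n) x z := hp2 _ _ _ _
  · refine ⟨{
      IsOpen := fun O => ∀ x ∈ O, ∃ n : I, {y | ∃ m : I, g m ≤ p (g n) x y} ⊆ O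
      isOpen_univ := fun x _ => ⟨1, fun _ _ => trivial⟩
      isOpen_inter := ?_
      isOpen_sUnion := ?_ }, fun _ => Iff.rfl⟩
    · intro O₁ O₂ h₁ h₂ x ⟨hx₁, hx₂⟩
      obtain ⟨n₁, hn₁⟩ := h₁ x hx₁
      obtain ⟨n₂, hn₂⟩ := h₂ x hx₂
      refine ⟨n₁ * n₂, fun y hy => ?_⟩
      obtain ⟨h, h'⟩ := C3 n₁ n₂ x y hy
      exact ⟨hn₁ h, hn₂ h'⟩
    · intro S hS x ⟨O, hO, hxO⟩
      obtain ⟨n, hn⟩ := hS O hO x hxO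
      exact ⟨n, fun y hy => ⟨O, hO, hn hy⟩⟩
end

section
/- Let (I,·,1) be a unitary magma and (B,+,0) a monoid equipped with a family of subsets S_n ⊆ B (n ∈ I) and maps α_n : S_n → I such that (i) 0 ∈ S_n for all n; (ii) for each n, if a, a' ∈ S_n and a' ∈ S_{α_n(a)} then a + a' ∈ S_n; (iii) S_{n·m} ⊆ S_n ∩ S_m. Then setting x ≤^n y iff y = x + a for some a ∈ S_n, with ∂^n(x,y) = α_n(a)·n, defines a cartesian spacial fibrous preorder on B, and hence the collection τ = {O ⊆ B : ∀ x ∈ O, ∃ n ∈ I, x + S_n ⊆ O} is a topology on B. -/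
/-- a monoid `B` with a family of subsets `S n` and maps
`α n : S n → I` satisfying (i)-(iii) yields a cartesian spacial fibrous preorder
(`x ≤^n y ↔ ∃ a ∈ S n, x + a = y`, `∂^n(x,y) = α n a · n`), hence
`τ = {O | ∀ x ∈ O, ∃ n, x + S n ⊆ O}` is a topology on `B`. -/
theorem stmt_14 {I B : Type*} [MulOneClass I] [AddMonoid B]
    (S : I → Set B) (α : I → B → I)
    (h0 : ∀ n : I, (0 : B) ∈ S n)
    (hadd : ∀ (n : I), ∀ a ∈ S n, ∀ a' ∈ S n, a' ∈ S (α n a) → a + a' ∈ S n)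
    (hmul : ∀ n m : I, S (n * m) ⊆ S n ∩ S m)
    (d : I → B → B → I)
    (hd : ∀ (n : I) (x y : B), (∃ a ∈ S n, x + a = y) →
      ∃ a ∈ S n, x + a = y ∧ d n x y = α n a * n) :
    (∀ (n : I) (x : B), ∃ a ∈ S n, x + a = x) ∧
    (∀ (n : I) (x y z : B), (∃ a ∈ S n, x + a = y) →
      (∃ a' ∈ S (d n x y), y + a' = z) → ∃ a'' ∈ S n, x + a'' = z) ∧
    (∀ (n m : I) (x y : B), (∃ a ∈ S (n * m), x + a = y) →
      (∃ a ∈ S n, x + a = y) ∧ (∃ a ∈ S m, x + a = y)) ∧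
    (∃ T : TopologicalSpace B, ∀ O : Set B,
      T.IsOpen O ↔ ∀ x ∈ O, ∃ n : I, {y | ∃ a ∈ S n, x + a = y} ⊆ O) := by
  refine ⟨fun n x => ⟨0, h0 n, add_zero x⟩, ?_, ?_, ?_⟩
  · rintro n x y z hxy ⟨a', ha', rfl⟩
    obtain ⟨a, ha, rfl, hdeq⟩ := hd n x y hxy
    rw [hdeq] at ha'
    obtain ⟨ha'1, ha'2⟩ := hmul _ _ ha'
    exact ⟨a + a', hadd n a ha a' ha'2 ha'1, (add_assoc x a a').symm⟩
  · rintro n m x y ⟨a, ha, rfl⟩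
    obtain ⟨h1, h2⟩ := hmul n m ha
    exact ⟨⟨a, h1, rfl⟩, ⟨a, h2, rfl⟩⟩
  · refine ⟨⟨fun O => ∀ x ∈ O, ∃ n : I, {y | ∃ a ∈ S n, x + a = y} ⊆ O, ?_, ?_, ?_⟩,
      fun O => Iff.rfl⟩
    · intro x _; exact ⟨1, fun _ _ => trivial⟩
    · rintro O₁ O₂ h1 h2 x ⟨hx1, hx2⟩
      obtain ⟨n, hn⟩ := h1 x hx1
      obtain ⟨m, hm⟩ := h2 x hx2
      refine ⟨n * m, fun y ⟨a, ha, hay⟩ => ?_⟩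
      obtain ⟨ha1, ha2⟩ := hmul n m ha
      exact ⟨hn ⟨a, ha1, hay⟩, hm ⟨a, ha2, hay⟩⟩
    · intro s hs x ⟨O, hO, hxO⟩
      obtain ⟨n, hn⟩ := hs O hO x hxO
      exact ⟨n, fun y hy => ⟨O, hO, hn hy⟩⟩
end

section
/- Let (B,+,0) be a commutative monoid, S ⊆ B, and α : S → ℕ (positive naturals) satisfying (i) 0 ∈ S; (ii) a + α(a)·a' ∈ S for all a, a' ∈ S; (iii) n·a ∈ S for all a ∈ S, n ∈ ℕ. Then the system x ≤^n y iff y = x + n·a for some a ∈ S, with ∂^n(x,y) = α(a)·n, is a cartesian spacial fibrous preorder on B indexed by (ℕ,·,1), inducing a topology with neighbourhood system N(n,x) = {x + n·a : a ∈ S}. -/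
/-- a commutative monoid `B` with `S ⊆ B` and `α : S → ℕ+`
satisfying (i)-(iii) yields a cartesian spacial fibrous preorder indexed by
`(ℕ,·,1)` via `x ≤^n y ↔ y = x + n·a` for some `a ∈ S`, `∂^n(x,y) = α(a)·n`,
inducing a topology with neighbourhoods `N(n,x) = {x + n·a : a ∈ S}`. -/
theorem stmt_17 {B : Type*} [AddCommMonoid B]
    (S : Set B) (α : B → ℕ+)
    (h0 : (0 : B) ∈ S)
    (hadd : ∀ a ∈ S, ∀ a' ∈ S, a + ((α a : ℕ) • a') ∈ S)
    (hmul : ∀ a ∈ S, ∀ n : ℕ+, (n : ℕ) • a ∈ S)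
    (d : ℕ+ → B → B → ℕ+)
    (hd : ∀ (n : ℕ+) (x y : B), (∃ a ∈ S, y = x + (n : ℕ) • a) →
      ∃ a ∈ S, y = x + (n : ℕ) • a ∧ d n x y = α a * n) :
    (∀ (n : ℕ+) (x : B), ∃ a ∈ S, x = x + (n : ℕ) • a) ∧
    (∀ (n : ℕ+) (x y z : B), (∃ a ∈ S, y = x + (n : ℕ) • a) →
      (∃ a' ∈ S, z = y + ((d n x y : ℕ+) : ℕ) • a') →
      ∃ a'' ∈ S, z = x + (n : ℕ) • a'') ∧
    (∀ (n m : ℕ+) (x y : B), (∃ a ∈ S, y = x + ((n * m : ℕ+) : ℕ) • a) →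
      (∃ a ∈ S, y = x + (n : ℕ) • a) ∧ (∃ a ∈ S, y = x + (m : ℕ) • a)) ∧
    (∃ T : TopologicalSpace B, ∀ O : Set B,
      T.IsOpen O ↔ ∀ x ∈ O, ∃ n : ℕ+, {y | ∃ a ∈ S, y = x + (n : ℕ) • a} ⊆ O) := by
  have key : ∀ (n m : ℕ+) (x y : B), (∃ a ∈ S, y = x + ((n * m : ℕ+) : ℕ) • a) →
      (∃ a ∈ S, y = x + (n : ℕ) • a) ∧ (∃ a ∈ S, y = x + (m : ℕ) • a) := by
    intro n m x y ⟨a, ha, hy⟩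
    constructor
    · exact ⟨(m : ℕ) • a, hmul a ha m, by rw [hy, PNat.mul_coe, mul_smul]⟩
    · exact ⟨(n : ℕ) • a, hmul a ha n, by
        rw [hy, PNat.mul_coe, mul_comm, mul_smul]⟩
  refine ⟨?_, ?_, key, ?_⟩
  · intro n x; exact ⟨0, h0, by simp⟩
  · intro n x y z h1 h2
    obtain ⟨a, ha, hy, hda⟩ := hd n x y h1
    obtain ⟨a', ha', hz⟩ := h2
    refine ⟨a + (α a : ℕ) • a', hadd a ha a' ha', ?_⟩
    rw [hz, hda, hy, PNat.mul_coe, smul_add, add_assoc, smul_smul,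
      mul_comm (n : ℕ)]
  · refine ⟨⟨fun O => ∀ x ∈ O, ∃ n : ℕ+, {y | ∃ a ∈ S, y = x + (n : ℕ) • a} ⊆ O,
      ?_, ?_, ?_⟩, fun O => Iff.rfl⟩
    · intro x _; exact ⟨1, fun y _ => trivial⟩
    · intro s t hs ht x hx
      obtain ⟨n, hn⟩ := hs x hx.1
      obtain ⟨m, hm⟩ := ht x hx.2
      refine ⟨n * m, fun y hy => ?_⟩
      obtain ⟨h1, h2⟩ := key n m x y hy
      exact ⟨hn h1, hm h2⟩
    · intro s hs x hx
      obtain ⟨t, ht, hxt⟩ := hx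
      obtain ⟨n, hn⟩ := hs t ht x hxt
      exact ⟨n, hn.trans (Set.subset_sUnion_of_mem ht)⟩
end
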